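/- arXiv:1909.04298 — 4 statements merged into one kernel-verified Lean document; each statement's English description precedes it below -/
import Mathlib

section
/- The family ℬ := {V_α(x) : x ∈ X, α ∈ [‖x‖,λ)} is a base of the topology τ on X. -/
universe u v

open Ordinal Set Topology Cardinal

namespace LawsonExample

def Xset (lam : Cardinal.{u}) : Set (Ordinal.{u} → Fin 3) :=
  {x | (∀ γ : Ordinal.{u}, lam.ord ≤ γ → x γ = 2) ∧ {γ : Ordinal.{u} | x γ ≠ 2}.Finite}

noncomputable def nrm (x : Ordinal.{u} → Fin 3) : Ordinal.{u} :=
  sInf {α | ∀ γ, α ≤ γ → x γ = 2}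

noncomputable def Vnbhd (lam : Cardinal.{u}) (x : ↥(Xset lam)) (α : Ordinal.{u}) :
    Set ↥(Xset lam) :=
  if x.1 0 = 2 then {x}
  else if x.1 0 = 1 then
    {y | (∀ γ, 1 ≤ γ → γ < α → y.1 γ = x.1 γ) ∧
         (∀ γ, α ≤ γ → γ < lam.ord → y.1 γ ≠ 1) ∧
         (y.1 0 = 1 ∨ (y.1 0 = 2 ∧ α < nrm y.1))}
  else
    {y | (∀ γ, 1 ≤ γ → γ < α → y.1 γ = x.1 γ) ∧
         (y.1 0 = 0 ∨ (y.1 0 = 2 ∧ α < nrm y.1 ∧ y.1 (Ordinal.pred (nrm y.1)) = 1))}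

def tauSet (lam : Cardinal.{u}) : Set (Set ↥(Xset lam)) :=
  {U | ∀ x ∈ U, ∃ α : Ordinal.{u}, nrm x.1 ≤ α ∧ α < lam.ord ∧ Vnbhd lam x α ⊆ U}

lemma nrm_spec {lam : Cardinal.{u}} (x : ↥(Xset lam)) {γ : Ordinal.{u}}
    (h : nrm x.1 ≤ γ) : x.1 γ = 2 := by
  have hne : {α : Ordinal.{u} | ∀ γ, α ≤ γ → x.1 γ = 2}.Nonempty :=
    ⟨lam.ord, fun γ hγ => x.2.1 γ hγ⟩
  exact csInf_mem hne γ h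

lemma nrm_lt {lam : Cardinal.{u}} (hlam : ℵ₀ ≤ lam) (x : ↥(Xset lam)) :
    nrm x.1 < lam.ord := by
  have hlim : Order.IsSuccLimit lam.ord := Cardinal.isSuccLimit_ord hlam
  rcases eq_empty_or_nonempty {γ | x.1 γ ≠ 2} with he | hne
  · have h0 : nrm x.1 ≤ 0 := csInf_le' (fun γ _ => by
      by_contra hc
      exact (eq_empty_iff_forall_notMem.1 he γ) hc)
    exact lt_of_le_of_lt h0 hlim.pos
  · set m := sSup {γ | x.1 γ ≠ 2} with hm_def
    have hmem : m ∈ {γ | x.1 γ ≠ 2} := hne.csSup_mem x.2.2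
    have hm : m < lam.ord := lt_of_not_ge fun h => hmem (x.2.1 m h)
    have hb : nrm x.1 ≤ m + 1 := csInf_le' (fun γ hγ => by
      by_contra hc
      have hle : γ ≤ m := le_csSup x.2.2.bddAbove hc
      rw [Ordinal.add_one_eq_succ] at hγ
      exact absurd hγ (not_le.2 (lt_of_le_of_lt hle (Order.lt_succ m))))
    have : m + 1 < lam.ord := by
      rw [Ordinal.add_one_eq_succ]; exact hlim.succ_lt hm
    exact lt_of_le_of_lt hb this

lemma fin3_cases (a : Fin 3) : a = 0 ∨ a = 1 ∨ a = 2 := by revert a; decide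

lemma mem_Vnbhd_self {lam : Cardinal.{u}} (x : ↥(Xset lam)) {α : Ordinal.{u}}
    (h : nrm x.1 ≤ α) : x ∈ Vnbhd lam x α := by
  rcases fin3_cases (x.1 0) with h0 | h0 | h0
  · have h2 : x.1 0 ≠ 2 := by rw [h0]; decide
    have h1 : x.1 0 ≠ 1 := by rw [h0]; decide
    rw [Vnbhd, if_neg h2, if_neg h1]
    exact ⟨fun γ _ _ => rfl, Or.inl h0⟩
  · have h2 : x.1 0 ≠ 2 := by rw [h0]; decide
    rw [Vnbhd, if_neg h2, if_pos h0]
    refine ⟨fun γ _ _ => rfl, fun γ hγ _ => ?_, Or.inl h0⟩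
    rw [nrm_spec x (le_trans h hγ)]; decide
  · rw [Vnbhd, if_pos h0]; exact rfl

lemma Vnbhd_mono {lam : Cardinal.{u}} (x : ↥(Xset lam)) {α β : Ordinal.{u}}
    (hα : nrm x.1 ≤ α) (hαβ : α ≤ β) : Vnbhd lam x β ⊆ Vnbhd lam x α := by
  rcases fin3_cases (x.1 0) with h0 | h0 | h0
  · have h2 : x.1 0 ≠ 2 := by rw [h0]; decide
    have h1 : x.1 0 ≠ 1 := by rw [h0]; decide
    rw [Vnbhd, Vnbhd, if_neg h2, if_neg h1, if_neg h2, if_neg h1]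
    rintro y ⟨hr, hy⟩
    refine ⟨fun γ h1γ h2γ => hr γ h1γ (lt_of_lt_of_le h2γ hαβ), ?_⟩
    rcases hy with hy | ⟨hy2, hylt, hyp⟩
    · exact Or.inl hy
    · exact Or.inr ⟨hy2, lt_of_le_of_lt hαβ hylt, hyp⟩
  · have h2 : x.1 0 ≠ 2 := by rw [h0]; decide
    rw [Vnbhd, Vnbhd, if_neg h2, if_pos h0, if_neg h2, if_pos h0]
    rintro y ⟨hr, hns, hy⟩
    have hα1 : 1 ≤ α := by
      by_contra hc
      have : α = 0 := Ordinal.lt_one_iff_zero.1 (not_le.1 hc)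
      have : x.1 0 = 2 := nrm_spec x (by rw [← this]; exact hα)
      exact h2 this
    refine ⟨fun γ h1γ h2γ => hr γ h1γ (lt_of_lt_of_le h2γ hαβ), ?_, ?_⟩
    · intro γ hγ hγlt
      by_cases hγβ : β ≤ γ
      · exact hns γ hγβ hγlt
      · have h1γ : 1 ≤ γ := le_trans hα1 hγ
        rw [hr γ h1γ (not_le.1 hγβ)]
        rw [nrm_spec x (le_trans hα hγ)]
        decide
    · rcases hy with hy | ⟨hy2, hylt⟩
      · exact Or.inl hy
      · exact Or.inr ⟨hy2, lt_of_le_of_lt hαβ hylt⟩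
  · rw [Vnbhd, Vnbhd, if_pos h0, if_pos h0]

noncomputable def tau (lam : Cardinal.{u}) (hlam : ℵ₀ ≤ lam) :
    TopologicalSpace ↥(Xset lam) where
  IsOpen U := U ∈ tauSet lam
  isOpen_univ := fun x _ =>
    ⟨nrm x.1, le_rfl, nrm_lt hlam x, subset_univ _⟩
  isOpen_inter := by
    intro U V hU hV x hx
    obtain ⟨α, hα1, hα2, hα3⟩ := hU x hx.1
    obtain ⟨β, hβ1, hβ2, hβ3⟩ := hV x hx.2
    refine ⟨max α β, le_trans hα1 (le_max_left _ _), max_lt hα2 hβ2, fun y hy => ?_⟩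
    exact ⟨hα3 (Vnbhd_mono x hα1 (le_max_left _ _) hy),
           hβ3 (Vnbhd_mono x hβ1 (le_max_right _ _) hy)⟩
  isOpen_sUnion := by
    intro S hS x hx
    obtain ⟨U, hU, hxU⟩ := hx
    obtain ⟨α, hα1, hα2, hα3⟩ := hS U hU x hxU
    exact ⟨α, hα1, hα2, fun y hy => ⟨U, hU, hα3 hy⟩⟩


/-- The semilattice operation of `X`: pointwise minimum. -/
noncomputable def pmin (lam : Cardinal.{u}) (x y : ↥(Xset lam)) : ↥(Xset lam) :=
  ⟨fun γ => min (x.1 γ) (y.1 γ), by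
    constructor
    · intro γ hγ
      show min (x.1 γ) (y.1 γ) = 2
      rw [x.2.1 γ hγ, y.2.1 γ hγ, min_self]
    · refine (x.2.2.union y.2.2).subset fun γ hγ => ?_
      have hγ' : min (x.1 γ) (y.1 γ) ≠ 2 := hγ
      simp only [mem_union, mem_setOf_eq]
      by_contra hc
      push_neg at hc
      rw [hc.1, hc.2, min_self] at hγ'
      exact hγ' rfl⟩

/-- `B` is a base of the topology `t`: it consists of open sets, and every open set is a
union of members of `B`. -/
def IsBase {X : Type v} (t : TopologicalSpace X) (B : Set (Set X)) : Prop :=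
  (∀ U ∈ B, IsOpen[t] U) ∧ ∀ U, IsOpen[t] U → ∃ S ⊆ B, U = ⋃₀ S

/-- The family `ℬ = {V_α(x) : x ∈ X, α ∈ [‖x‖, λ)}`. -/
def Vfamily (lam : Cardinal.{u}) : Set (Set ↥(Xset lam)) :=
  {W | ∃ (x : ↥(Xset lam)) (α : Ordinal.{u}), nrm x.1 ≤ α ∧ α < lam.ord ∧ W = Vnbhd lam x α}

/-- The weight of a topological space: the smallest cardinality of a base of its topology. -/
noncomputable def weight {X : Type v} (t : TopologicalSpace X) : Cardinal.{v} :=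
  sInf {c : Cardinal.{v} | ∃ B : Set (Set X), IsBase t B ∧ c = Cardinal.mk ↥B}

/-- The function `𝟎_β`, with `𝟎_β β = 0` and `𝟎_β γ = 2` for `γ ≠ β`. -/
noncomputable def zeroF (β : Ordinal.{u}) : Ordinal.{u} → Fin 3 :=
  fun γ => if γ = β then 0 else 2

/-- The function `𝟏_β`, with `𝟏_β β = 1` and `𝟏_β γ = 2` for `γ ≠ β`. -/
noncomputable def oneF (β : Ordinal.{u}) : Ordinal.{u} → Fin 3 :=
  fun γ => if γ = β then 1 else 2

lemma zeroF_mem (lam : Cardinal.{u}) {β : Ordinal.{u}} (h : β < lam.ord) :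
    zeroF β ∈ Xset lam := by
  constructor
  · intro γ hγ
    have hne : γ ≠ β := fun e => absurd h (not_lt.2 (e ▸ hγ))
    simp [zeroF, hne]
  · refine (finite_singleton β).subset fun γ hγ => ?_
    simp only [mem_setOf_eq, zeroF] at hγ
    by_contra hc
    simp only [mem_singleton_iff] at hc
    rw [if_neg hc] at hγ
    exact hγ rfl

lemma oneF_mem (lam : Cardinal.{u}) {β : Ordinal.{u}} (h : β < lam.ord) :
    oneF β ∈ Xset lam := by
  constructor
  · intro γ hγ
    have hne : γ ≠ β := fun e => absurd h (not_lt.2 (e ▸ hγ))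
    simp [oneF, hne]
  · refine (finite_singleton β).subset fun γ hγ => ?_
    simp only [mem_setOf_eq, oneF] at hγ
    by_contra hc
    simp only [mem_singleton_iff] at hc
    rw [if_neg hc] at hγ
    exact hγ rfl

/-- `𝟎_β` as an element of `X` (for `β < λ`). -/
noncomputable def zeroE (lam : Cardinal.{u}) {β : Ordinal.{u}} (h : β < lam.ord) :
    ↥(Xset lam) := ⟨zeroF β, zeroF_mem lam h⟩

/-- `𝟏_β` as an element of `X` (for `β < λ`). -/
noncomputable def oneE (lam : Cardinal.{u}) {β : Ordinal.{u}} (h : β < lam.ord) :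
    ↥(Xset lam) := ⟨oneF β, oneF_mem lam h⟩

lemma isBase_of_forall_exists_mem_subset {X : Type v} (t : TopologicalSpace X)
    (B : Set (Set X)) (hB : ∀ W ∈ B, IsOpen[t] W)
    (hnhds : ∀ U, IsOpen[t] U → ∀ x ∈ U, ∃ W ∈ B, x ∈ W ∧ W ⊆ U) : IsBase t B := by
  refine ⟨hB, fun U hU => ⟨{W | W ∈ B ∧ W ⊆ U}, fun W hW => hW.1, ?_⟩⟩
  refine Subset.antisymm (fun x hx => ?_) (sUnion_subset fun W hW => hW.2)
  obtain ⟨W, hWB, hxW, hWU⟩ := hnhds U hU x hx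
  exact ⟨W, ⟨hWB, hWU⟩, hxW⟩

section Vnbhd

variable {lam : Cardinal.{u}}

lemma Vnbhd_of_apply_zero_eq_two (x : ↥(Xset lam)) (h : x.1 0 = 2) (α : Ordinal.{u}) :
    Vnbhd lam x α = {x} := by
  rw [Vnbhd, if_pos h]

lemma mem_Vnbhd_of_apply_zero_eq_zero {x : ↥(Xset lam)} (h : x.1 0 = 0) {α : Ordinal.{u}}
    {y : ↥(Xset lam)} :
    y ∈ Vnbhd lam x α ↔ (∀ γ, 1 ≤ γ → γ < α → y.1 γ = x.1 γ) ∧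
      (y.1 0 = 0 ∨ (y.1 0 = 2 ∧ α < nrm y.1 ∧ y.1 (Ordinal.pred (nrm y.1)) = 1)) := by
  rw [Vnbhd, if_neg (by rw [h]; decide), if_neg (by rw [h]; decide)]
  rfl

lemma mem_Vnbhd_of_apply_zero_eq_one {x : ↥(Xset lam)} (h : x.1 0 = 1) {α : Ordinal.{u}}
    {y : ↥(Xset lam)} :
    y ∈ Vnbhd lam x α ↔ (∀ γ, 1 ≤ γ → γ < α → y.1 γ = x.1 γ) ∧
      (∀ γ, α ≤ γ → γ < lam.ord → y.1 γ ≠ 1) ∧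
      (y.1 0 = 1 ∨ (y.1 0 = 2 ∧ α < nrm y.1)) := by
  rw [Vnbhd, if_neg (by rw [h]; decide), if_pos h]
  rfl

lemma one_le_of_nrm_le {x : ↥(Xset lam)} (h : x.1 0 ≠ 2) {α : Ordinal.{u}}
    (hα : nrm x.1 ≤ α) : 1 ≤ α := by
  rw [Order.one_le_iff_ne_zero]
  rintro rfl
  exact h (nrm_spec x hα)

/-- Around a point `y ∈ V_α(x)` with `y(0) ≠ 2`, the neighbourhoods `V_β(y)`, `β ≥ α`, stay inside
`V_α(x)`: they only constrain `y` further on `[α, β)`, where `y` agrees with `x`. -/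
lemma Vnbhd_subset_of_mem {x y : ↥(Xset lam)} {α β : Ordinal.{u}} (hα : nrm x.1 ≤ α)
    (hy : y ∈ Vnbhd lam x α) (hy2 : y.1 0 ≠ 2) (hαβ : α ≤ β) :
    Vnbhd lam y β ⊆ Vnbhd lam x α := by
  intro z hz
  rcases fin3_cases (x.1 0) with hx0 | hx1 | hx2
  · obtain ⟨hyx, hy0 | ⟨hy2', -⟩⟩ := (mem_Vnbhd_of_apply_zero_eq_zero hx0).1 hy
    swap; · exact absurd hy2' hy2
    obtain ⟨hzy, hz⟩ := (mem_Vnbhd_of_apply_zero_eq_zero hy0).1 hz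
    refine (mem_Vnbhd_of_apply_zero_eq_zero hx0).2
      ⟨fun γ h1 hγ => (hzy γ h1 (hγ.trans_le hαβ)).trans (hyx γ h1 hγ), ?_⟩
    exact hz.imp_right fun ⟨h2, hlt, hpred⟩ => ⟨h2, hαβ.trans_lt hlt, hpred⟩
  · obtain ⟨hyx, hy1, hy1' | ⟨hy2', -⟩⟩ := (mem_Vnbhd_of_apply_zero_eq_one hx1).1 hy
    swap; · exact absurd hy2' hy2
    obtain ⟨hzy, hz1, hz⟩ := (mem_Vnbhd_of_apply_zero_eq_one hy1').1 hz
    have hα1 : 1 ≤ α := one_le_of_nrm_le (by rw [hx1]; decide) hα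
    refine (mem_Vnbhd_of_apply_zero_eq_one hx1).2
      ⟨fun γ h1 hγ => (hzy γ h1 (hγ.trans_le hαβ)).trans (hyx γ h1 hγ), fun γ hγ hγl => ?_,
        hz.imp_right fun ⟨h2, hlt⟩ => ⟨h2, hαβ.trans_lt hlt⟩⟩
    rcases lt_or_ge γ β with hγβ | hβγ
    · rw [hzy γ (hα1.trans hγ) hγβ]
      exact hy1 γ hγ hγl
    · exact hz1 γ hβγ hγl
  · rw [Vnbhd_of_apply_zero_eq_two x hx2, mem_singleton_iff] at hy
    exact absurd (hy ▸ hx2) hy2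

lemma Vnbhd_mem_tauSet (hlam : ℵ₀ ≤ lam) (x : ↥(Xset lam)) {α : Ordinal.{u}}
    (hα : nrm x.1 ≤ α) (hαl : α < lam.ord) : Vnbhd lam x α ∈ tauSet lam := by
  intro y hy
  by_cases hy2 : y.1 0 = 2
  · refine ⟨nrm y.1, le_rfl, nrm_lt hlam y, ?_⟩
    rwa [Vnbhd_of_apply_zero_eq_two y hy2, singleton_subset_iff]
  · exact ⟨max α (nrm y.1), le_max_right _ _, max_lt hαl (nrm_lt hlam y),
      Vnbhd_subset_of_mem hα hy hy2 (le_max_left _ _)⟩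

end Vnbhd

/-- **Claim 3.** The family `ℬ = {V_α(x) : x ∈ X, α ∈ [‖x‖, λ)}` is a base of
the topology `τ` on `X`. -/
theorem isBase_Vfamily (lam : Cardinal.{u}) (hlam : ℵ₀ ≤ lam) :
    IsBase (tau lam hlam) (Vfamily lam) := by
  refine isBase_of_forall_exists_mem_subset _ _ ?_ ?_
  · rintro _ ⟨x, α, hα, hαl, rfl⟩
    exact Vnbhd_mem_tauSet hlam x hα hαl
  · intro U hU x hx
    obtain ⟨α, hα, hαl, hαU⟩ := hU x hx
    exact ⟨_, ⟨x, α, hα, hαl, rfl⟩, mem_Vnbhd_self x hα, hαU⟩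

end LawsonExample
end

section
/- The topological space (X,τ) is Hausdorff: any two distinct points of X have disjoint open neighborhoods. -/
/-!
Each `V_α(x)` is open, since `V_β(z) ⊆ V_α(x)` whenever `z ∈ V_α(x)` and `β ≥ α`. Distinct
`x, y` are separated by `V_α(x)` and `V_α(y)` with `α = max ‖x‖ ‖y‖`. A common point agrees
with both on `[1, α)`, so `x(0) = y(0)` would force `x = y`, as both are `2` from `α` on.
A point of `X₂` lies in `V_α(x)` with `x ∉ X₂` only if its norm exceeds `α`, which separates
`X₂` from `X₀ ∪ X₁`; and `V_α(x)`, `V_α(y)` with `x ∈ X₀`, `y ∈ X₁` could only share a point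
of `X₂` whose last support value is `1`, at a position `≥ α`.
-/

universe u v

open Ordinal Set Topology Cardinal

namespace LawsonExample

section Neighbourhoods

variable {lam : Cardinal.{u}} {x y z : ↥(Xset lam)} {α β : Ordinal.{u}}

lemma Vnbhd_of_two (hx : x.1 0 = 2) : Vnbhd lam x α = {x} := by
  simp [Vnbhd, hx]

lemma mem_Vnbhd_of_one (hx : x.1 0 = 1) :
    y ∈ Vnbhd lam x α ↔ EqOn y.1 x.1 (Ico 1 α) ∧ (∀ γ ∈ Ico α lam.ord, y.1 γ ≠ 1) ∧
      (y.1 0 = 1 ∨ (y.1 0 = 2 ∧ α < nrm y.1)) := by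
  simp [Vnbhd, hx, EqOn]

lemma mem_Vnbhd_of_zero (hx : x.1 0 = 0) :
    y ∈ Vnbhd lam x α ↔ EqOn y.1 x.1 (Ico 1 α) ∧
      (y.1 0 = 0 ∨ (y.1 0 = 2 ∧ α < nrm y.1 ∧ y.1 (pred (nrm y.1)) = 1)) := by
  simp [Vnbhd, hx, EqOn]

lemma eqOn_Ico_of_mem_Vnbhd (hy : y ∈ Vnbhd lam x α) : EqOn y.1 x.1 (Ico 1 α) := by
  rcases fin3_cases (x.1 0) with hx | hx | hx
  · exact ((mem_Vnbhd_of_zero hx).1 hy).1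
  · exact ((mem_Vnbhd_of_one hx).1 hy).1
  · rw [Vnbhd_of_two hx, mem_singleton_iff] at hy
    exact hy ▸ eqOn_refl _ _

lemma apply_zero_eq_of_mem_Vnbhd (hy : y ∈ Vnbhd lam x α) (hy2 : y.1 0 ≠ 2) :
    y.1 0 = x.1 0 := by
  rcases fin3_cases (x.1 0) with hx | hx | hx
  · rw [hx]
    exact ((mem_Vnbhd_of_zero hx).1 hy).2.resolve_right fun h => hy2 h.1
  · rw [hx]
    exact ((mem_Vnbhd_of_one hx).1 hy).2.2.resolve_right fun h => hy2 h.1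
  · rw [Vnbhd_of_two hx, mem_singleton_iff] at hy
    rw [hy]

lemma lt_nrm_of_mem_Vnbhd (hy : y ∈ Vnbhd lam x α) (hx2 : x.1 0 ≠ 2) (hy2 : y.1 0 = 2) :
    α < nrm y.1 := by
  rcases fin3_cases (x.1 0) with hx | hx | hx
  · simpa [hy2] using ((mem_Vnbhd_of_zero hx).1 hy).2.imp_right (·.2.1)
  · simpa [hy2] using ((mem_Vnbhd_of_one hx).1 hy).2.2
  · exact absurd hx hx2

lemma notMem_Vnbhd_of_apply_zero_eq_two (hx2 : x.1 0 = 2) (hy2 : y.1 0 ≠ 2)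
    (hx : nrm x.1 ≤ α) : x ∉ Vnbhd lam y α := fun hxy =>
  (lt_nrm_of_mem_Vnbhd hxy hy2 hx2).not_ge hx

lemma one_le_of_nrm_le_s11 (hx : x.1 0 ≠ 2) (hα : nrm x.1 ≤ α) : 1 ≤ α :=
  Order.one_le_iff_ne_zero.2 fun h => hx (nrm_spec x (h ▸ hα))

lemma eq_of_eqOn_Ico (h0 : x.1 0 = y.1 0) (h : EqOn x.1 y.1 (Ico 1 α))
    (hx : nrm x.1 ≤ α) (hy : nrm y.1 ≤ α) : x = y := by
  refine Subtype.ext (funext fun γ => ?_)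
  rcases eq_or_ne γ 0 with rfl | hγ0
  · exact h0
  rcases lt_or_ge γ α with hγ | hγ
  · exact h ⟨Order.one_le_iff_ne_zero.2 hγ0, hγ⟩
  · rw [nrm_spec x (hx.trans hγ), nrm_spec y (hy.trans hγ)]

lemma Vnbhd_subset_Vnbhd (hx : nrm x.1 ≤ α) (hz : z ∈ Vnbhd lam x α) (hαβ : α ≤ β) :
    Vnbhd lam z β ⊆ Vnbhd lam x α := by
  by_cases hz2 : z.1 0 = 2
  · rwa [Vnbhd_of_two hz2, singleton_subset_iff]
  have hzx := apply_zero_eq_of_mem_Vnbhd hz hz2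
  have hIco : Ico 1 α ⊆ Ico 1 β := Ico_subset_Ico_right hαβ
  intro w hw
  rcases fin3_cases (x.1 0) with hx0 | hx0 | hx0
  · rw [mem_Vnbhd_of_zero (hzx.trans hx0)] at hw
    rw [mem_Vnbhd_of_zero hx0] at hz ⊢
    exact ⟨(hw.1.mono hIco).trans hz.1, hw.2.imp_right fun h => ⟨h.1, hαβ.trans_lt h.2.1, h.2.2⟩⟩
  · rw [mem_Vnbhd_of_one (hzx.trans hx0)] at hw
    rw [mem_Vnbhd_of_one hx0] at hz ⊢
    refine ⟨(hw.1.mono hIco).trans hz.1, fun γ hγ => ?_,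
      hw.2.2.imp_right fun h => ⟨h.1, hαβ.trans_lt h.2⟩⟩
    rcases lt_or_ge γ β with hγβ | hγβ
    · rw [hw.1 ⟨(one_le_of_nrm_le_s11 (by omega) hx).trans hγ.1, hγβ⟩]
      exact hz.2.1 γ hγ
    · exact hw.2.1 γ ⟨hγβ, hγ.2⟩
  · exact absurd (hzx.trans hx0) hz2

lemma isOpen_Vnbhd (hlam : ℵ₀ ≤ lam) (hx : nrm x.1 ≤ α) (hα : α < lam.ord) :
    IsOpen[tau lam hlam] (Vnbhd lam x α) := fun z hz =>
  ⟨max α (nrm z.1), le_max_right _ _, max_lt hα (nrm_lt hlam z),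
    Vnbhd_subset_Vnbhd hx hz (le_max_left _ _)⟩

lemma disjoint_Vnbhd_of_zero_of_one (hlam : ℵ₀ ≤ lam) (hx : x.1 0 = 0) (hy : y.1 0 = 1) :
    Disjoint (Vnbhd lam x α) (Vnbhd lam y α) := by
  refine disjoint_left.2 fun z hzx hzy => ?_
  rw [mem_Vnbhd_of_zero hx] at hzx
  rw [mem_Vnbhd_of_one hy] at hzy
  obtain ⟨-, hz0 | ⟨-, hαz, hz1⟩⟩ := hzx
  · simp [hz0] at hzy
  · have hα : α ≤ pred (nrm z.1) := Order.lt_succ_iff.1 (hαz.trans_le (self_le_succ_pred _))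
    exact hzy.2.1 _ ⟨hα, (pred_le_self _).trans_lt (nrm_lt hlam z)⟩ hz1

lemma disjoint_Vnbhd (hlam : ℵ₀ ≤ lam) (hxy : x ≠ y) (hx : nrm x.1 ≤ α) (hy : nrm y.1 ≤ α) :
    Disjoint (Vnbhd lam x α) (Vnbhd lam y α) := by
  by_cases h0 : x.1 0 = y.1 0
  · refine disjoint_left.2 fun z hzx hzy => hxy (eq_of_eqOn_Ico h0 ?_ hx hy)
    exact (eqOn_Ico_of_mem_Vnbhd hzx).symm.trans (eqOn_Ico_of_mem_Vnbhd hzy)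
  by_cases hx2 : x.1 0 = 2
  · rw [Vnbhd_of_two hx2, disjoint_singleton_left]
    exact notMem_Vnbhd_of_apply_zero_eq_two hx2 (by omega) hx
  by_cases hy2 : y.1 0 = 2
  · rw [Vnbhd_of_two hy2, disjoint_singleton_right]
    exact notMem_Vnbhd_of_apply_zero_eq_two hy2 (by omega) hy
  obtain ⟨hx0, hy1⟩ | ⟨hx1, hy0⟩ : (x.1 0 = 0 ∧ y.1 0 = 1) ∨ (x.1 0 = 1 ∧ y.1 0 = 0) := by
    omega
  · exact disjoint_Vnbhd_of_zero_of_one hlam hx0 hy1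
  · exact (disjoint_Vnbhd_of_zero_of_one hlam hy0 hx1).symm

end Neighbourhoods

/-- The topological space `(X, τ)` is Hausdorff: any two distinct points of
`X` have disjoint open neighborhoods. -/
theorem t2Space_tau (lam : Cardinal.{u}) (hlam : ℵ₀ ≤ lam) :
    @T2Space ↥(Xset lam) (tau lam hlam) := by
  let _ := tau lam hlam
  refine ⟨fun x y hxy => ?_⟩
  have hx : nrm x.1 ≤ max (nrm x.1) (nrm y.1) := le_max_left _ _
  have hy : nrm y.1 ≤ max (nrm x.1) (nrm y.1) := le_max_right _ _
  have hα : max (nrm x.1) (nrm y.1) < lam.ord := max_lt (nrm_lt hlam x) (nrm_lt hlam y)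
  exact ⟨_, _, isOpen_Vnbhd hlam hx hα, isOpen_Vnbhd hlam hy hα, mem_Vnbhd_self x hx,
    mem_Vnbhd_self y hy, disjoint_Vnbhd hlam hxy hx hy⟩

end LawsonExample
end

section
/- For every cardinal κ < cf(λ), the topological space (X,τ) is a P_κ-space: for every family 𝒰 ⊆ τ with |𝒰| ≤ κ, the intersection ⋂𝒰 belongs to τ. -/
universe u v

open Ordinal Set Topology Cardinal

namespace LawsonExample

/-! Each open set containing `x` contains some `V_α(x)` with `α < λ`, and `V_α(x)` shrinks as
`α` grows. Fewer than `cf(λ)` ordinals below `λ` have a common upper bound `β < λ`, and then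
`V_β(x)` lies in every member of the family. -/

theorem _root_.Ordinal.exists_upperBound_lt_of_lift_mk_lt_cof {ι : Type v} {f : ι → Ordinal.{u}}
    {a : Ordinal.{u}} (hι : Cardinal.lift.{u} #ι < Cardinal.lift.{v} a.cof)
    (hf : ∀ i, f i < a) : ∃ b < a, ∀ i, f i ≤ b := by
  have hbdd : BddAbove (range f) := ⟨a, by rintro _ ⟨i, rfl⟩; exact (hf i).le⟩
  refine ⟨⨆ i, f i, Ordinal.lift_iSup_lt_of_lt_cof ?_ hf, fun i => le_ciSup hbdd i⟩
  rwa [← Ordinal.lift_cof]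

/-- For every cardinal `κ < cf(λ)` the topological space `(X, τ)` is a
`P_κ`-space: the intersection of any family of at most `κ` open sets is open. -/
theorem P_kappa_tau (lam : Cardinal.{u}) (hlam : ℵ₀ ≤ lam) (κ : Cardinal.{u})
    (hκ : κ < (Cardinal.ord lam).cof) :
    ∀ 𝒰 : Set (Set ↥(Xset lam)), (∀ U ∈ 𝒰, IsOpen[tau lam hlam] U) →
      Cardinal.mk ↥𝒰 ≤ Cardinal.lift.{u + 1} κ → IsOpen[tau lam hlam] (⋂₀ 𝒰) := by
  intro 𝒰 hopen hcard x hx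
  choose α hα_nrm hα_lt hαV using fun U : 𝒰 => hopen U U.2 x (hx U U.2)
  have h𝒰 : Cardinal.lift.{u} #𝒰 < Cardinal.lift.{u + 1} lam.ord.cof := by
    rw [Cardinal.lift_id'.{u, u + 1}]
    exact hcard.trans_lt (Cardinal.lift_lt.2 hκ)
  obtain ⟨β, hβ_lt, hαβ⟩ := Ordinal.exists_upperBound_lt_of_lift_mk_lt_cof h𝒰 hα_lt
  refine ⟨max (nrm x.1) β, le_max_left _ _, max_lt (nrm_lt hlam x) hβ_lt, fun y hy U hU => ?_⟩
  exact hαV ⟨U, hU⟩ (Vnbhd_mono x (hα_nrm _) ((hαβ _).trans (le_max_right _ _)) hy)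

end LawsonExample
end

section
/- The partial order ≤_X := {(x,y) ∈ X × X : x·y = x} is not closed in (X,τ) × (X,τ). Specifically, letting 𝟎_β, 𝟏_β ∈ X (for β < λ) be determined by 𝟎_β(β) = 0, 𝟎_β(γ) = 2 for γ ≠ β, and 𝟏_β(β) = 1, 𝟏_β(γ) = 2 for γ ≠ β, the pair (𝟏_0, 𝟎_0) does not belong to ≤_X but belongs to the closure of ≤_X in X × X, since for every ordinal α ∈ [1,λ) and every β ∈ [α,λ) the pair (𝟎_β, 𝟏_β) lies in (V_α(𝟏_0) × V_α(𝟎_0)) ∩ ≤_X. -/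
universe u v

open Ordinal Set Topology Cardinal

namespace LawsonExample

/-! Since `𝟎_β ≤_X 𝟏_β`, it suffices that `(𝟎_β, 𝟏_β) → (𝟏_0, 𝟎_0)` as `β → λ`. For `β ≥ α`,
both `𝟎_β` and `𝟏_β` lie in `X_2`, are constantly `2` on `[1, α)` like `𝟏_0` and `𝟎_0`, and have
norm `β + 1 > α`; moreover `𝟎_β` takes no value `1`, and the last nontrivial value of `𝟏_β` is `1`.
These are exactly the conditions for `𝟎_β ∈ V_α(𝟏_0)` and `𝟏_β ∈ V_α(𝟎_0)`. -/

section Points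

variable {lam : Cardinal.{u}}

lemma nrm_ite_eq_add_one {β : Ordinal.{u}} {c : Fin 3} (hc : c ≠ 2) :
    nrm (fun γ => if γ = β then c else 2) = β + 1 := by
  refine IsLeast.csInf_eq
    ⟨fun γ hγ => if_neg (Order.add_one_le_iff.1 hγ).ne', fun b hb => ?_⟩
  by_contra! hlt
  exact hc (by simpa using hb β (Order.lt_add_one_iff.1 hlt))

lemma nrm_zeroF (β : Ordinal.{u}) : nrm (zeroF β) = β + 1 :=
  nrm_ite_eq_add_one (by decide)

lemma nrm_oneF (β : Ordinal.{u}) : nrm (oneF β) = β + 1 :=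
  nrm_ite_eq_add_one (by decide)

lemma zeroF_of_ne {β γ : Ordinal.{u}} (h : γ ≠ β) : zeroF β γ = 2 := if_neg h

lemma oneF_of_ne {β γ : Ordinal.{u}} (h : γ ≠ β) : oneF β γ = 2 := if_neg h

lemma zeroE_mem_Vnbhd_oneE (h0 : (0 : Ordinal.{u}) < lam.ord) {α β : Ordinal.{u}} (hα : 1 ≤ α)
    (hαβ : α ≤ β) (hβ : β < lam.ord) : zeroE lam hβ ∈ Vnbhd lam (oneE lam h0) α := by
  have hβ0 : (0 : Ordinal.{u}) ≠ β := (Order.one_le_iff_ne_zero.1 (hα.trans hαβ)).symm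
  have hx0 : (oneE lam h0).1 0 = 1 := if_pos rfl
  simp only [Vnbhd, hx0]
  refine ⟨fun γ h1γ hγα => ?_, fun γ _ _ => ?_, Or.inr ⟨zeroF_of_ne hβ0, ?_⟩⟩
  · exact (zeroF_of_ne (hγα.trans_le hαβ).ne).trans
      (oneF_of_ne (Order.one_le_iff_ne_zero.1 h1γ)).symm
  · change zeroF β γ ≠ 1
    unfold zeroF
    split_ifs <;> decide
  · change α < nrm (zeroF β)
    rwa [nrm_zeroF, Order.lt_add_one_iff]

lemma oneE_mem_Vnbhd_zeroE (h0 : (0 : Ordinal.{u}) < lam.ord) {α β : Ordinal.{u}} (hα : 1 ≤ α)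
    (hαβ : α ≤ β) (hβ : β < lam.ord) : oneE lam hβ ∈ Vnbhd lam (zeroE lam h0) α := by
  have hβ0 : (0 : Ordinal.{u}) ≠ β := (Order.one_le_iff_ne_zero.1 (hα.trans hαβ)).symm
  have hx0 : (zeroE lam h0).1 0 = 0 := if_pos rfl
  simp only [Vnbhd, hx0]
  refine ⟨fun γ h1γ hγα => ?_, Or.inr ⟨oneF_of_ne hβ0, ?_, ?_⟩⟩
  · exact (oneF_of_ne (hγα.trans_le hαβ).ne).trans
      (zeroF_of_ne (Order.one_le_iff_ne_zero.1 h1γ)).symm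
  · change α < nrm (oneF β)
    rwa [nrm_oneF, Order.lt_add_one_iff]
  · change oneF β (Ordinal.pred (nrm (oneF β))) = 1
    rw [nrm_oneF, Ordinal.pred_add_one]
    exact if_pos rfl

lemma pmin_zeroE_oneE {β : Ordinal.{u}} (hβ : β < lam.ord) :
    pmin lam (zeroE lam hβ) (oneE lam hβ) = zeroE lam hβ := by
  refine Subtype.ext (funext fun γ => ?_)
  change min (zeroF β γ) (oneF β γ) = zeroF β γ
  by_cases h : γ = β <;> simp [zeroF, oneF, h]

lemma pmin_oneE_zeroE_ne {β : Ordinal.{u}} (hβ : β < lam.ord) :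
    pmin lam (oneE lam hβ) (zeroE lam hβ) ≠ oneE lam hβ := fun h => by
  have hβ := congrArg (fun z : ↥(Xset lam) => z.1 β) h
  simp [pmin, oneE, zeroE, oneF, zeroF] at hβ

end Points

lemma mem_closure_of_forall_Vnbhd {lam : Cardinal.{u}} (hlam : ℵ₀ ≤ lam)
    {S : Set (↥(Xset lam) × ↥(Xset lam))} {x y : ↥(Xset lam)}
    (h : ∀ α, nrm x.1 ≤ α → nrm y.1 ≤ α → α < lam.ord →
      ∃ p ∈ S, p.1 ∈ Vnbhd lam x α ∧ p.2 ∈ Vnbhd lam y α) :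
    (x, y) ∈ @closure _ (@instTopologicalSpaceProd _ _ (tau lam hlam) (tau lam hlam)) S := by
  let := tau lam hlam
  refine mem_closure_iff.2 fun o ho hxy => ?_
  obtain ⟨U, V, hU, hV, hxU, hyV, hUV⟩ := isOpen_prod_iff.1 ho x y hxy
  obtain ⟨α, hxα, hα, hαU⟩ := hU x hxU
  obtain ⟨β, hyβ, hβ, hβV⟩ := hV y hyV
  obtain ⟨p, hpS, hpx, hpy⟩ := h (max α β) (hxα.trans (le_max_left _ _))
    (hyβ.trans (le_max_right _ _)) (max_lt hα hβ)
  exact ⟨p, hUV ⟨hαU (Vnbhd_mono x hxα (le_max_left _ _) hpx),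
    hβV (Vnbhd_mono y hyβ (le_max_right _ _) hpy)⟩, hpS⟩

/-- **Claim 10.** The partial order `≤_X = {(x,y) | x·y = x}` is not closed in
`(X,τ) × (X,τ)`.  Specifically, for the elements `𝟎_β, 𝟏_β ∈ X` (`β < λ`) with
`𝟎_β β = 0`, `𝟏_β β = 1` and value `2` elsewhere, the pair `(𝟏_0, 𝟎_0)` does not belong to
`≤_X` but belongs to the closure of `≤_X` in `X × X`, since for every ordinal `α ∈ [1, λ)` and
every `β ∈ [α, λ)` the pair `(𝟎_β, 𝟏_β)` lies in `(V_α(𝟏_0) × V_α(𝟎_0)) ∩ ≤_X`. -/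
theorem partialOrder_not_closed (lam : Cardinal.{u}) (hlam : ℵ₀ ≤ lam)
    (h0 : (0 : Ordinal.{u}) < lam.ord) :
    ¬ @IsClosed (↥(Xset lam) × ↥(Xset lam))
        (@instTopologicalSpaceProd _ _ (tau lam hlam) (tau lam hlam))
        {p : ↥(Xset lam) × ↥(Xset lam) | pmin lam p.1 p.2 = p.1} ∧
    pmin lam (oneE lam h0) (zeroE lam h0) ≠ oneE lam h0 ∧
    (oneE lam h0, zeroE lam h0) ∈
      @closure (↥(Xset lam) × ↥(Xset lam))
        (@instTopologicalSpaceProd _ _ (tau lam hlam) (tau lam hlam))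
        {p : ↥(Xset lam) × ↥(Xset lam) | pmin lam p.1 p.2 = p.1} ∧
    ∀ α : Ordinal.{u}, 1 ≤ α → α < lam.ord → ∀ β : Ordinal.{u}, α ≤ β →
      ∀ hβ : β < lam.ord,
        zeroE lam hβ ∈ Vnbhd lam (oneE lam h0) α ∧
        oneE lam hβ ∈ Vnbhd lam (zeroE lam h0) α ∧
        pmin lam (zeroE lam hβ) (oneE lam hβ) = zeroE lam hβ := by
  have hcl := mem_closure_of_forall_Vnbhd hlam
    (S := {p : ↥(Xset lam) × ↥(Xset lam) | pmin lam p.1 p.2 = p.1})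
    (x := oneE lam h0) (y := zeroE lam h0) fun α hα _ hαlt => by
      have h1α : 1 ≤ α := by rwa [oneE, nrm_oneF, zero_add] at hα
      exact ⟨(zeroE lam hαlt, oneE lam hαlt), pmin_zeroE_oneE hαlt,
        zeroE_mem_Vnbhd_oneE h0 h1α le_rfl hαlt, oneE_mem_Vnbhd_zeroE h0 h1α le_rfl hαlt⟩
  let := tau lam hlam
  refine ⟨fun hc => pmin_oneE_zeroE_ne h0 (hc.closure_subset hcl), pmin_oneE_zeroE_ne h0, hcl,
    fun α hα _ β hαβ hβ => ⟨zeroE_mem_Vnbhd_oneE h0 hα hαβ hβ,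
      oneE_mem_Vnbhd_zeroE h0 hα hαβ hβ, pmin_zeroE_oneE hβ⟩⟩

end LawsonExample
end
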